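/- Let n >= 3 be an integer. Then D_n := 739*n^2 - 2717*n + 1960 > 0. Set omega_6 = 18*(5*n-2)/(n*D_n), omega_3 = 18*(91*n-4)/(n*D_n), omega_5 = -8*omega_6, omega_2 = -8*omega_3, omega_4 = 64*omega_6, omega_1 = 1 - n*(49*omega_6 - 7*omega_3). Let S be the (12n+1) x (6n+1) real matrix and L the (6n+1) x (12n+1) real matrix with the bordered block-circulant structure described in the context, and let A = L*S. Then there exists a row vector omega in R^{6n+1} whose entry at index 0 equals omega_1, whose six entries on each sector are (at the same within-sector positions for every sector) the values omega_2, omega_3, omega_4, omega_6 each once and omega_5 twice, and which satisfies omega * A = e_0 (the first standard basis row vector of R^{6n+1}). -/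

import Mathlib

open Matrix

noncomputable section

/-- Central block of the Catmull–Clark local subdivision matrix. -/
def ccS0 : Matrix (Fin 12) (Fin 6) ℝ :=
  (1/64 : ℝ) • !![24,0,4,0,0,0; 36,6,6,1,0,0; 24,24,4,4,0,0;
                  16,0,16,0,0,0; 24,4,24,4,0,0; 16,16,16,16,0,0;
                  4,0,24,0,4,0; 6,1,36,6,6,1; 4,4,24,24,4,4;
                  0,0,16,0,16,0; 0,0,24,4,24,4; 0,0,16,16,16,16]

/-- Block of the Catmull–Clark local subdivision matrix for sector `k + 1`. -/
def ccS1 : Matrix (Fin 12) (Fin 6) ℝ :=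
  (1/64 : ℝ) • !![4,0,0,0,0,0; 1,0,0,0,0,0; 0,0,0,0,0,0;
                  16,0,0,0,0,0; 4,0,0,0,0,0; 0,0,0,0,0,0;
                  24,4,0,0,0,0; 6,1,0,0,0,0; 0,0,0,0,0,0;
                  16,16,0,0,0,0; 4,4,0,0,0,0; 0,0,0,0,0,0]

/-- Block of the Catmull–Clark local subdivision matrix for sector `k - 1`. -/
def ccS2 : Matrix (Fin 12) (Fin 6) ℝ :=
  (1/64 : ℝ) • !![4,0,4,0,0,0; 1,0,6,0,1,0; 0,0,4,0,4,0;
                  0,0,0,0,0,0; 0,0,0,0,0,0; 0,0,0,0,0,0;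
                  0,0,0,0,0,0; 0,0,0,0,0,0; 0,0,0,0,0,0;
                  0,0,0,0,0,0; 0,0,0,0,0,0; 0,0,0,0,0,0]

/-- Column-0 entries of the sector rows of the Catmull–Clark subdivision
matrix. -/
def ccSCol0 : Fin 12 → ℝ := (1/64 : ℝ) • ![24,6,0,16,4,0,4,1,0,0,0,0]

/-- Row-0 entries on each column sector of the Catmull–Clark subdivision
matrix (before the `1/(4n²)` scaling). -/
def ccSRow0 : Fin 6 → ℝ := ![6,0,1,0,0,0]

/-- Central block of the Catmull–Clark position (limit-mask) matrix. -/
def ccL0 : Matrix (Fin 6) (Fin 12) ℝ :=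
  ((1/36 : ℝ) • (!![16,4,4,1,0,0; 4,16,1,4,0,0; 0,4,0,1,0,0;
                    4,1,16,4,4,1; 1,4,4,16,1,4; 0,1,0,4,0,1;
                    0,0,4,1,16,4; 0,0,1,4,4,16; 0,0,0,1,0,4;
                    0,0,0,0,4,1; 0,0,0,0,1,4; 0,0,0,0,0,1] :
    Matrix (Fin 12) (Fin 6) ℝ))ᵀ

/-- Block of the Catmull–Clark position matrix for sector `k + 1`. -/
def ccL1 : Matrix (Fin 6) (Fin 12) ℝ :=
  ((1/36 : ℝ) • (!![1,0,4,0,1,0; 0,0,1,0,4,0; 0,0,0,0,1,0;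
                    0,0,0,0,0,0; 0,0,0,0,0,0; 0,0,0,0,0,0;
                    0,0,0,0,0,0; 0,0,0,0,0,0; 0,0,0,0,0,0;
                    0,0,0,0,0,0; 0,0,0,0,0,0; 0,0,0,0,0,0] :
    Matrix (Fin 12) (Fin 6) ℝ))ᵀ

/-- Block of the Catmull–Clark position matrix for sector `k - 1`. -/
def ccL2 : Matrix (Fin 6) (Fin 12) ℝ :=
  ((1/36 : ℝ) • (!![1,0,0,0,0,0; 0,0,0,0,0,0; 0,0,0,0,0,0;
                    4,1,0,0,0,0; 0,0,0,0,0,0; 0,0,0,0,0,0;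
                    1,4,0,0,0,0; 0,0,0,0,0,0; 0,0,0,0,0,0;
                    0,1,0,0,0,0; 0,0,0,0,0,0; 0,0,0,0,0,0] :
    Matrix (Fin 12) (Fin 6) ℝ))ᵀ

/-- Column-0 entries of the sector rows of the Catmull–Clark position
matrix. -/
def ccLCol0 : Fin 6 → ℝ := (1/36 : ℝ) • ![4,0,1,0,0,0]

/-- Row-0 entries on each column sector of the Catmull–Clark position matrix
(before the `1/(n(n+5))` scaling). -/
def ccLRow0 : Fin 12 → ℝ := ![4,0,0,1,0,0,0,0,0,0,0,0]

/-- The `(12n+1) × (6n+1)` bordered block-circulant Catmull–Clark local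
subdivision matrix `S` at a vertex of valence `n`. Rows/columns are indexed by
a center index (`Sum.inl ()`) followed by `n` cyclic sectors of size `12`
(rows) resp. `6` (columns). -/
def ccSMat (n : ℕ) [NeZero n] :
    Matrix (Unit ⊕ ZMod n × Fin 12) (Unit ⊕ ZMod n × Fin 6) ℝ :=
  Matrix.of fun r c =>
    match r, c with
    | Sum.inl _, Sum.inl _ => 1 - 7 / (4 * (n : ℝ))
    | Sum.inl _, Sum.inr (_, j) => (1 / (4 * (n : ℝ)^2)) * ccSRow0 j
    | Sum.inr (_, i), Sum.inl _ => ccSCol0 i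
    | Sum.inr (k, i), Sum.inr (m, j) =>
        if m = k then ccS0 i j
        else if m = k + 1 then ccS1 i j
        else if m = k - 1 then ccS2 i j
        else 0

/-- The `(6n+1) × (12n+1)` bordered block-circulant Catmull–Clark position
(limit-mask) matrix `L` at a vertex of valence `n`. -/
def ccLMat (n : ℕ) [NeZero n] :
    Matrix (Unit ⊕ ZMod n × Fin 6) (Unit ⊕ ZMod n × Fin 12) ℝ :=
  Matrix.of fun r c =>
    match r, c with
    | Sum.inl _, Sum.inl _ => (n : ℝ) / ((n : ℝ) + 5)
    | Sum.inl _, Sum.inr (_, j) => (1 / ((n : ℝ) * ((n : ℝ) + 5))) * ccLRow0 j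
    | Sum.inr (_, i), Sum.inl _ => ccLCol0 i
    | Sum.inr (k, i), Sum.inr (m, j) =>
        if m = k then ccL0 i j
        else if m = k + 1 then ccL1 i j
        else if m = k - 1 then ccL2 i j
        else 0

/-!
Both `S` and `L` are bordered block-circulant over the cyclic group `ZMod n` of sectors. Such a
matrix maps a vector that is constant across the sectors to another such vector, acting on it
through its border entries and the sum `B₀ + B₁ + B₂` of its three circulant blocks (its symbol
at frequency zero). For the sector-constant `ω` the equation `ω * (L * S) = e₀` therefore
collapses to seven rational identities in `n`, which hold once the denominator `n * Dₙ` is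
cleared; `Dₙ > 0` for `n ≥ 3` since `D₃ = 460` and `Dₙ` increases for `n ≥ 2`.
-/

section BorderedCirculant

variable {R : Type*} {α β : Type*}

def borderedCirculant [Zero R] (n : ℕ) (a : R) (row : β → R) (col : α → R)
    (B₀ B₁ B₂ : Matrix α β R) : Matrix (Unit ⊕ ZMod n × α) (Unit ⊕ ZMod n × β) R :=
  Matrix.of fun r c =>
    match r, c with
    | Sum.inl _, Sum.inl _ => a
    | Sum.inl _, Sum.inr (_, j) => row j
    | Sum.inr (_, i), Sum.inl _ => col i
    | Sum.inr (k, i), Sum.inr (m, j) =>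
        if m = k then B₀ i j
        else if m = k + 1 then B₁ i j
        else if m = k - 1 then B₂ i j
        else 0

def sectorConst (n : ℕ) (c : R) (w : α → R) : Unit ⊕ ZMod n × α → R :=
  Sum.elim (fun _ => c) (fun p => w p.2)

theorem sectorConst_one_zero [Zero R] [One R] [DecidableEq α] (n : ℕ) :
    sectorConst n (1 : R) (0 : α → R) = Pi.single (Sum.inl ()) 1 := by
  funext r
  rcases r with _ | _ <;> simp [sectorConst]

theorem ZMod.sum_ite_neighbours [AddCommMonoid R] {n : ℕ} [NeZero n] (hn : 3 ≤ n)
    (m : ZMod n) (a b c : R) :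
    (∑ k : ZMod n, if m = k then a else if m = k + 1 then b else if m = k - 1 then c else 0)
      = a + b + c := by
  have one_ne : (1 : ZMod n) ≠ 0 := by
    exact_mod_cast (ZMod.natCast_eq_zero_iff 1 n).not.mpr
      (Nat.not_dvd_of_pos_of_lt one_pos (by omega))
  have two_ne : (2 : ZMod n) ≠ 0 := by
    exact_mod_cast (ZMod.natCast_eq_zero_iff 2 n).not.mpr
      (Nat.not_dvd_of_pos_of_lt two_pos (by omega))
  have hm₁ : m - 1 ≠ m := fun h => one_ne (by linear_combination -h)
  have hm₂ : m + 1 ≠ m := fun h => one_ne (by linear_combination h)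
  have hm₃ : m + 1 ≠ m - 1 := fun h => two_ne (by linear_combination h)
  have hsplit : ∀ k : ZMod n,
      (if m = k then a else if m = k + 1 then b else if m = k - 1 then c else 0)
        = (if k = m then a else 0) + (if k = m - 1 then b else 0)
          + (if k = m + 1 then c else 0) := by
    intro k
    have e₁ : m = k + 1 ↔ k = m - 1 := by rw [eq_sub_iff_add_eq, eq_comm]
    have e₂ : m = k - 1 ↔ k = m + 1 := by rw [eq_sub_iff_add_eq', eq_comm, add_comm]
    simp only [e₁, e₂, eq_comm (a := m)]
    by_cases h₀ : k = m
    · simp [h₀, hm₁.symm, hm₂.symm]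
    by_cases h₁ : k = m - 1
    · simp [h₁, hm₁, hm₃.symm]
    by_cases h₂ : k = m + 1
    · simp [h₂, hm₂, hm₃]
    simp [h₀, h₁, h₂]
  simp only [hsplit, Finset.sum_add_distrib, Finset.sum_ite_eq', Finset.mem_univ, if_true]

theorem sectorConst_vecMul_borderedCirculant [Semiring R] [Fintype α] {n : ℕ} [NeZero n]
    (hn : 3 ≤ n) (c : R) (w : α → R) (a : R) (row : β → R) (col : α → R)
    (B₀ B₁ B₂ : Matrix α β R) :
    sectorConst n c w ᵥ* borderedCirculant n a row col B₀ B₁ B₂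
      = sectorConst n (c * a + n * (w ⬝ᵥ col)) (c • row + w ᵥ* (B₀ + B₁ + B₂)) := by
  funext r
  rcases r with _ | ⟨m, j⟩
  · simp [vecMul, dotProduct, Fintype.sum_prod_type, sectorConst, borderedCirculant]
  · simp only [vecMul, dotProduct, Fintype.sum_sum_type, Fintype.sum_prod_type, sectorConst,
      borderedCirculant, of_apply, Sum.elim_inl, Sum.elim_inr, Finset.univ_unique,
      Finset.sum_singleton]
    rw [Finset.sum_comm]
    simp only [← Finset.mul_sum, ZMod.sum_ite_neighbours hn]
    simp [vecMul, dotProduct, mul_add, Finset.sum_add_distrib]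

end BorderedCirculant

theorem ccSMat_eq_borderedCirculant (n : ℕ) [NeZero n] :
    ccSMat n = borderedCirculant n (1 - 7 / (4 * (n : ℝ)))
      (fun j => 1 / (4 * (n : ℝ) ^ 2) * ccSRow0 j) ccSCol0 ccS0 ccS1 ccS2 := by
  ext (_ | _) (_ | _) <;> rfl

theorem ccLMat_eq_borderedCirculant (n : ℕ) [NeZero n] :
    ccLMat n = borderedCirculant n ((n : ℝ) / (n + 5))
      (fun j => 1 / (n * (n + 5)) * ccLRow0 j) ccLCol0 ccL0 ccL1 ccL2 := by
  ext (_ | _) (_ | _) <;> rfl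

theorem ccS0_add_ccS1_add_ccS2 :
    ccS0 + ccS1 + ccS2 = (1/64 : ℝ) • !![32,0,8,0,0,0; 38,6,12,1,1,0; 24,24,8,4,4,0;
                                          32,0,16,0,0,0; 28,4,24,4,0,0; 16,16,16,16,0,0;
                                          28,4,24,0,4,0; 12,2,36,6,6,1; 4,4,24,24,4,4;
                                          16,16,16,0,16,0; 4,4,24,4,24,4; 0,0,16,16,16,16] := by
  simp only [ccS0, ccS1, ccS2, ← smul_add, of_add_of, cons_add_cons, empty_add_empty]
  norm_num

theorem ccL0_add_ccL1_add_ccL2 :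
    ccL0 + ccL1 + ccL2 = ((1/36 : ℝ) • !![18,4,8,1,1,0; 4,16,2,4,4,0; 0,4,0,1,1,0;
                                           8,2,16,4,4,1; 1,4,4,16,1,4; 0,1,0,4,0,1;
                                           1,4,4,1,16,4; 0,0,1,4,4,16; 0,0,0,1,0,4;
                                           0,1,0,0,4,1; 0,0,0,0,1,4; 0,0,0,0,0,1])ᵀ := by
  simp only [ccL0, ccL1, ccL2, ← transpose_add, ← smul_add, of_add_of, cons_add_cons,
    empty_add_empty]
  norm_num

set_option maxHeartbeats 400000 in
/-- For any valence `n ≥ 3`, `Dₙ = 739n² - 2717n + 1960 > 0`, and the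
Catmull–Clark quasi-interpolation weight vector `ω` — with center entry `ω₁`
and sector entries `ω₂, ω₃, ω₄, ω₆` each once and `ω₅` twice (at the same
within-sector positions for every sector) — satisfies `ω * A = e₀` with
`A = L * S`. -/
theorem catmull_clark_quasi_interpolation_weights
    (n : ℕ) [NeZero n] (hn : 3 ≤ n)
    (D ω₁ ω₂ ω₃ ω₄ ω₅ ω₆ : ℝ)
    (hD : D = 739 * n^2 - 2717 * n + 1960)
    (hω₆ : ω₆ = 18 * (5 * n - 2) / (n * D))
    (hω₃ : ω₃ = 18 * (91 * n - 4) / (n * D))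
    (hω₅ : ω₅ = -8 * ω₆) (hω₂ : ω₂ = -8 * ω₃) (hω₄ : ω₄ = 64 * ω₆)
    (hω₁ : ω₁ = 1 - n * (49 * ω₆ - 7 * ω₃)) :
    0 < D ∧
    ∃ ω : (Unit ⊕ ZMod n × Fin 6) → ℝ, ∃ w : Fin 6 → ℝ,
      ω (Sum.inl ()) = ω₁ ∧
      (∀ (k : ZMod n) (j : Fin 6), ω (Sum.inr (k, j)) = w j) ∧
      ({w 0, w 1, w 2, w 3, w 4, w 5} : Multiset ℝ)
        = {ω₂, ω₃, ω₄, ω₆, ω₅, ω₅} ∧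
      ω ᵥ* (ccLMat n * ccSMat n) = Pi.single (Sum.inl ()) 1 := by
  have hn' : (3 : ℝ) ≤ n := by exact_mod_cast hn
  have hD_pos : 0 < D := by rw [hD]; nlinarith
  have hn₀ : (n : ℝ) ≠ 0 := by positivity
  have hD₀ : D ≠ 0 := hD_pos.ne'
  refine ⟨hD_pos, sectorConst n ω₁ ![ω₂, ω₃, ω₄, ω₅, ω₅, ω₆], ![ω₂, ω₃, ω₄, ω₅, ω₅, ω₆],
    rfl, fun _ _ => rfl, ?_, ?_⟩
  · simp only [cons_val, Multiset.insert_eq_cons, ← Multiset.singleton_add]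
    abel
  rw [← vecMul_vecMul, ccLMat_eq_borderedCirculant, ccSMat_eq_borderedCirculant,
    sectorConst_vecMul_borderedCirculant hn, sectorConst_vecMul_borderedCirculant hn,
    ccL0_add_ccL1_add_ccL2, ccS0_add_ccS1_add_ccS2, ← sectorConst_one_zero]
  subst hω₁ hω₂ hω₄ hω₅ hω₃ hω₆
  congr 1
  · simp [dotProduct, vecMul, Fin.sum_univ_succ, ccLCol0, ccSCol0, ccLRow0]
    field_simp
    subst hD
    ring
  · funext j
    fin_cases j <;>
    · simp [dotProduct, vecMul, Fin.sum_univ_succ, ccLCol0, ccLRow0, ccSRow0, vecHead, vecTail]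
      field_simp
      subst hD
      ring

end
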